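/- The set of dominators of a node b is totally ordered by the dominance relation: if d₁ and d₂ both dominate b, then d₁ dominates d₂ or d₂ dominates d₁. -/

import Mathlib

/-! If neither of two dominators `d₁, d₂` of `b` dominated the other, there would be paths
`r ⇝ d₁` avoiding `d₂` and `r ⇝ d₂` avoiding `d₁`. Along any path `r ⇝ b`, look at the last
vertex that is `d₁` or `d₂`; the rest of the path after it meets neither. Prefixing that rest with
the avoiding path to whichever of the two it is yields a path `r ⇝ b` missing the other one. -/

def IsPath {V : Type*} (E : V → V → Prop) (r b : V) (p : List V) : Prop :=
  p.Chain' E ∧ p.head? = some r ∧ p.getLast? = some b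

def Dominates {V : Type*} (E : V → V → Prop) (r d b : V) : Prop :=
  ∀ p : List V, IsPath E r b p → d ∈ p

theorem List.exists_eq_append_cons_forall_not_of_exists {α : Type*} {P : α → Prop} :
    ∀ {l : List α}, (∃ x ∈ l, P x) → ∃ t x s, l = t ++ x :: s ∧ P x ∧ ∀ y ∈ s, ¬ P y
  | [], ⟨_, hx, _⟩ => absurd hx List.not_mem_nil
  | a :: l, ⟨x, hx, hPx⟩ => by
    by_cases hl : ∃ y ∈ l, P y
    · obtain ⟨t, y, s, rfl, hy, hs⟩ := exists_eq_append_cons_forall_not_of_exists hl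
      exact ⟨a :: t, y, s, rfl, hy, hs⟩
    · push Not at hl
      obtain rfl | hxl := List.mem_cons.mp hx
      · exact ⟨[], x, l, rfl, hPx, hl⟩
      · exact absurd hPx (hl x hxl)

namespace IsPath

variable {V : Type*} {E : V → V → Prop} {r x b : V}

theorem append {p s : List V} (hp : IsPath E r x p) (hs : IsPath E x b (x :: s)) :
    IsPath E r b (p ++ s) := by
  obtain ⟨hpc, hpr, hpx⟩ := hp
  obtain ⟨hsc, -, hsb⟩ := hs
  have hp0 : p ≠ [] := by rintro rfl; simp at hpr
  refine ⟨List.isChain_append.mpr ⟨hpc, hsc.tail, ?_⟩, ?_, ?_⟩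
  · intro u hu v hv
    obtain rfl : x = u := by simpa [hpx] using hu
    cases s with
    | nil => simp at hv
    | cons w s =>
      obtain rfl : w = v := by simpa using hv
      exact (List.isChain_cons_cons.mp hsc).1
  · rwa [List.head?_append_of_ne_nil _ hp0]
  · cases s with
    | nil =>
      obtain rfl : x = b := by simpa using hsb
      simpa using hpx
    | cons w s => simpa [List.getLast?_append] using hsb

theorem of_append_cons {t s : List V} (h : IsPath E r b (t ++ x :: s)) :
    IsPath E x b (x :: s) := by
  obtain ⟨hc, -, hb⟩ := h
  exact ⟨hc.suffix (List.suffix_append t _), rfl, by simpa [List.getLast?_append] using hb⟩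

end IsPath

theorem Dominates.of_isPath_cons {V : Type*} {E : V → V → Prop} {r d x b : V} {s : List V}
    (h : Dominates E r d b) (hx : IsPath E x b (x :: s)) (hd : d ∉ s) : Dominates E r d x :=
  fun q hq => by simpa [hd] using h _ (hq.append hx)

theorem dominators_totally_ordered_general
    {V : Type*} (E : V → V → Prop) (r : V)
    (hreach : ∀ v : V, ∃ p : List V, IsPath E r v p)
    (b d₁ d₂ : V)
    (h₁ : Dominates E r d₁ b) (h₂ : Dominates E r d₂ b) :
    Dominates E r d₁ d₂ ∨ Dominates E r d₂ d₁ := by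
  obtain ⟨p, hp⟩ := hreach b
  obtain ⟨t, x, s, rfl, hx, hs⟩ :=
    List.exists_eq_append_cons_forall_not_of_exists (P := fun y => y = d₁ ∨ y = d₂)
      ⟨d₁, h₁ _ hp, .inl rfl⟩
  have hxb : IsPath E x b (x :: s) := hp.of_append_cons
  rcases hx with rfl | rfl
  · exact .inr (h₂.of_isPath_cons hxb fun hd => hs _ hd (.inr rfl))
  · exact .inl (h₁.of_isPath_cons hxb fun hd => hs _ hd (.inl rfl))

/-- the dominators of a node are totally ordered by dominance. -/
theorem dominators_totally_ordered
    {V : Type*} [Fintype V] (E : V → V → Prop) (r : V)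
    (hreach : ∀ v : V, ∃ p : List V, IsPath E r v p)
    (b d₁ d₂ : V)
    (h₁ : Dominates E r d₁ b) (h₂ : Dominates E r d₂ b) :
    Dominates E r d₁ d₂ ∨ Dominates E r d₂ d₁ :=
  dominators_totally_ordered_general E r hreach b d₁ d₂ h₁ h₂
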